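/- arXiv:0910.2886 — 2 statements merged into one kernel-verified Lean document; each statement's English description precedes it below -/
import Mathlib

section
/- Let f : ℝ → ℝ be continuous and bounded. Then for every ω ∈ C₀ there exists a continuous function X : [0,1] → ℝ satisfying X(t) = ∫₀¹ K(t,s) f(X(s)) ds + Y_t(ω) for all t ∈ [0,1] (in particular X(0) = X(1) = 0). -/
/-!
For a Lipschitz nonlinearity `g` the problem is solved by shooting. The solution of the initial
value problem with slope `a` at `0` is the fixed point of a Volterra operator whose `N`-th iterate
contracts (its Lipschitz constant is `L ^ N / N!`), so it depends continuously on `a`; as `g` is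
bounded, the intermediate value theorem yields a slope for which the boundary condition at `1`
holds.

A continuous `f` with `|f| ≤ C` is the limit of its Lipschitz envelopes
`f_n x = ⨅ y, f y + n |x - y|`, which are `n`-Lipschitz, bounded by `C`, and satisfy
`f_n (y_n) → f x` whenever `y_n → x`. The solutions `x_n` for `f_n` are the forcing term `Y(ω)`
plus a Green integral, which is bounded by `C` and `2C`-Lipschitz. By Arzelà–Ascoli a
subsequence converges uniformly, and dominated convergence passes to the limit in the integral
equation.
-/

open MeasureTheory

/-- The Green's function of `-d²/dt²` with Dirichlet boundary conditions. -/
noncomputable def Kgreen (t s : ℝ) : ℝ := min t s - t * s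

/-- `Y_t(ω) = -t ∫₀¹ ω(s) ds + ∫₀ᵗ ω(s) ds`. -/
noncomputable def Yw (ω : ℝ → ℝ) (t : ℝ) : ℝ :=
  -t * (∫ s in (0:ℝ)..1, ω s) + ∫ s in (0:ℝ)..t, ω s

open Set Filter Topology BoundedContinuousFunction unitInterval
open scoped NNReal

section LipschitzEnvelope

variable {α : Type*} [PseudoMetricSpace α]

noncomputable def lipschitzEnvelope (f : α → ℝ) (K : ℝ≥0) (x : α) : ℝ :=
  ⨅ y, f y + K * dist x y

variable {f : α → ℝ} {m : ℝ}

lemma bddBelow_range_add_mul_dist (hm : ∀ y, m ≤ f y) (K : ℝ≥0) (x : α) :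
    BddBelow (range fun y => f y + K * dist x y) := by
  refine ⟨m, ?_⟩
  rintro _ ⟨y, rfl⟩
  have := hm y
  have : 0 ≤ (K : ℝ) * dist x y := by positivity
  linarith

lemma lipschitzEnvelope_le (hm : ∀ y, m ≤ f y) (K : ℝ≥0) (x : α) :
    lipschitzEnvelope f K x ≤ f x := by
  simpa [lipschitzEnvelope] using ciInf_le (bddBelow_range_add_mul_dist hm K x) x

lemma le_lipschitzEnvelope (hm : ∀ y, m ≤ f y) (K : ℝ≥0) (x : α) :
    m ≤ lipschitzEnvelope f K x :=
  have : Nonempty α := ⟨x⟩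
  le_ciInf fun y => by
    have := hm y
    have : 0 ≤ (K : ℝ) * dist x y := by positivity
    linarith

lemma lipschitzWith_lipschitzEnvelope (hm : ∀ y, m ≤ f y) (K : ℝ≥0) :
    LipschitzWith K (lipschitzEnvelope f K) := by
  refine LipschitzWith.of_le_add_mul K fun x y => ?_
  have : Nonempty α := ⟨x⟩
  rw [← sub_le_iff_le_add]
  refine le_ciInf fun z => ?_
  calc lipschitzEnvelope f K x - K * dist x y
      ≤ f z + K * dist x z - K * dist x y := by
        gcongr; exact ciInf_le (bddBelow_range_add_mul_dist hm K x) z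
    _ ≤ f z + K * dist y z := by
        have := dist_triangle x y z
        have : (K : ℝ) * dist x z ≤ K * dist y z + K * dist x y := by
          rw [← mul_add]; gcongr; linarith
        linarith

/-- Away from a `δ`-ball around `x` the penalty `K * dist` exceeds any fixed gap once `K` is
large, while inside the ball `f` is close to `f x` by continuity. -/
lemma tendsto_lipschitzEnvelope {ι : Type*} {l : Filter ι} {K : ι → ℝ≥0} {y : ι → α} {x : α}
    (hm : ∀ y, m ≤ f y) (hf : ContinuousAt f x) (hK : Tendsto K l atTop)
    (hy : Tendsto y l (𝓝 x)) :
    Tendsto (fun i => lipschitzEnvelope f (K i) (y i)) l (𝓝 (f x)) := by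
  have : Nonempty α := ⟨x⟩
  refine tendsto_order.2 ⟨fun b hb => ?_, fun b hb => ?_⟩
  · obtain ⟨c, hbc, hcf⟩ := exists_between hb
    obtain ⟨δ, hδ, hfδ⟩ := Metric.eventually_nhds_iff.1 (hf.eventually (lt_mem_nhds hcf))
    filter_upwards [(NNReal.tendsto_coe_atTop.2 hK).eventually_ge_atTop (2 * (c - m) / δ),
      Metric.tendsto_nhds.1 hy (δ / 2) (half_pos hδ)] with i hKi hyi
    refine hbc.trans_le (le_ciInf fun z => ?_)
    by_cases hz : dist z x < δ
    · have : 0 ≤ (K i : ℝ) * dist (y i) z := by positivity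
      linarith [hfδ hz]
    · have hfar : δ / 2 ≤ dist (y i) z := by
        linarith [dist_triangle_left z x (y i), dist_comm (y i) x, not_lt.1 hz]
      have : c - m ≤ K i * dist (y i) z := by
        calc c - m = 2 * (c - m) / δ * (δ / 2) := by field_simp
          _ ≤ K i * dist (y i) z := by gcongr
      linarith [hm z]
  · filter_upwards [(hf.tendsto.comp hy).eventually (gt_mem_nhds hb)] with i hi
    exact (lipschitzEnvelope_le hm _ _).trans_lt hi

end LipschitzEnvelope

lemma LipschitzWith.dist_iterate_iterate_le {α : Type*} [PseudoMetricSpace α] {f g : α → α}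
    {K : ℝ≥0} (hf : LipschitzWith K f) {δ : ℝ} (hfg : ∀ z, dist (f z) (g z) ≤ δ) (n : ℕ)
    (z : α) : dist (f^[n] z) (g^[n] z) ≤ (∑ k ∈ Finset.range n, (K : ℝ) ^ k) * δ := by
  induction n with
  | zero => simp
  | succ n ih =>
    rw [Function.iterate_succ_apply', Function.iterate_succ_apply', geom_sum_succ, add_mul,
      one_mul, mul_assoc]
    calc dist (f (f^[n] z)) (g (g^[n] z))
        ≤ dist (f (f^[n] z)) (f (g^[n] z)) + dist (f (g^[n] z)) (g (g^[n] z)) :=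
          dist_triangle _ _ _
      _ ≤ K * dist (f^[n] z) (g^[n] z) + δ := add_le_add (hf.dist_le_mul _ _) (hfg _)
      _ ≤ K * ((∑ k ∈ Finset.range n, (K : ℝ) ^ k) * δ) + δ := by gcongr

section GreenKernel

lemma continuous_Kgreen : Continuous (Function.uncurry Kgreen) := by
  unfold Kgreen Function.uncurry; fun_prop

lemma Kgreen_zero_left {s : ℝ} (hs : 0 ≤ s) : Kgreen 0 s = 0 := by
  simp [Kgreen, hs]

lemma Kgreen_one_left {s : ℝ} (hs : s ≤ 1) : Kgreen 1 s = 0 := by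
  simp [Kgreen, hs]

lemma abs_Kgreen_le_one {t s : ℝ} (ht : t ∈ I) (hs : s ∈ I) : |Kgreen t s| ≤ 1 := by
  obtain ⟨ht0, ht1⟩ := ht
  obtain ⟨hs0, hs1⟩ := hs
  rw [Kgreen, abs_le]
  rcases le_total t s with h | h
  · rw [min_eq_left h]; constructor <;> nlinarith
  · rw [min_eq_right h]; constructor <;> nlinarith

lemma abs_Kgreen_sub_Kgreen_le {s : ℝ} (hs : s ∈ I) (t t' : ℝ) :
    |Kgreen t s - Kgreen t' s| ≤ 2 * |t - t'| := by
  have hmin : |min t s - min t' s| ≤ |t - t'| := by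
    simpa using abs_min_sub_min_le_max t s t' s
  have hprod : |t * s - t' * s| ≤ |t - t'| := by
    rw [← sub_mul, abs_mul, abs_of_nonneg hs.1]
    exact mul_le_of_le_one_right (abs_nonneg _) hs.2
  calc |Kgreen t s - Kgreen t' s| = |(min t s - min t' s) - (t * s - t' * s)| := by
        rw [Kgreen, Kgreen]; ring_nf
    _ ≤ |min t s - min t' s| + |t * s - t' * s| := abs_sub _ _
    _ ≤ 2 * |t - t'| := by linarith

end GreenKernel

section GreenIntegral

noncomputable def greenIntegral (h : ℝ → ℝ) (t : ℝ) : ℝ :=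
  ∫ s in (0 : ℝ)..1, Kgreen t s * h s

noncomputable def volterraIntegral (h : ℝ → ℝ) (t : ℝ) : ℝ :=
  ∫ s in (0 : ℝ)..t, (t - s) * h s

variable {h h' : ℝ → ℝ} {C : ℝ}

lemma greenIntegral_zero_left : greenIntegral h 0 = 0 := by
  rw [greenIntegral, intervalIntegral.integral_congr (g := 0) fun s hs => ?_]
  · simp
  · rw [uIcc_of_le zero_le_one] at hs
    simp [Kgreen_zero_left hs.1]

lemma greenIntegral_one_left : greenIntegral h 1 = 0 := by
  rw [greenIntegral, intervalIntegral.integral_congr (g := 0) fun s hs => ?_]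
  · simp
  · rw [uIcc_of_le zero_le_one] at hs
    simp [Kgreen_one_left hs.2]

lemma greenIntegral_eq (hh : Continuous h) {t : ℝ} (ht : t ∈ I) :
    greenIntegral h t = t * volterraIntegral h 1 - volterraIntegral h t := by
  have hint : ∀ (k : ℝ → ℝ), Continuous k → ∀ a b : ℝ,
      IntervalIntegrable (fun s => k s * h s) volume a b :=
    fun k hk a b => (hk.mul hh).intervalIntegrable a b
  have hK : Continuous (Kgreen t) := continuous_Kgreen.comp (by fun_prop : Continuous (t, ·))
  have left : ∫ s in (0 : ℝ)..t, Kgreen t s * h s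
      = t * (∫ s in (0 : ℝ)..t, (1 - s) * h s) - ∫ s in (0 : ℝ)..t, (t - s) * h s := by
    rw [← intervalIntegral.integral_const_mul, ← intervalIntegral.integral_sub
      ((hint (1 - ·) (by fun_prop) 0 t).const_mul t) (hint (t - ·) (by fun_prop) 0 t)]
    refine intervalIntegral.integral_congr fun s hs => ?_
    rw [uIcc_of_le ht.1] at hs
    simp only [Kgreen, min_eq_right hs.2]
    ring
  have right : ∫ s in t..1, Kgreen t s * h s = t * ∫ s in t..1, (1 - s) * h s := by
    rw [← intervalIntegral.integral_const_mul]
    refine intervalIntegral.integral_congr fun s hs => ?_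
    rw [uIcc_of_le ht.2] at hs
    simp only [Kgreen, min_eq_left hs.1]
    ring
  rw [greenIntegral, volterraIntegral, volterraIntegral,
    ← intervalIntegral.integral_add_adjacent_intervals (hint _ hK 0 t) (hint _ hK t 1),
    ← intervalIntegral.integral_add_adjacent_intervals (hint (1 - ·) (by fun_prop) 0 t)
      (hint (1 - ·) (by fun_prop) t 1), left, right]
  ring

lemma abs_greenIntegral_le (hC : ∀ s ∈ I, |h s| ≤ C) {t : ℝ} (ht : t ∈ I) :
    |greenIntegral h t| ≤ C := by
  have := intervalIntegral.norm_integral_le_of_norm_le_const (a := 0) (b := 1)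
    (f := fun s => Kgreen t s * h s) (C := C) fun s hs => by
      rw [uIoc_of_le zero_le_one] at hs
      have hs : s ∈ I := Ioc_subset_Icc_self hs
      rw [Real.norm_eq_abs, abs_mul]
      exact (mul_le_of_le_one_left (abs_nonneg _) (abs_Kgreen_le_one ht hs)).trans (hC s hs)
  simpa [greenIntegral] using this

lemma lipschitzWith_greenIntegral (hh : Continuous h) {K : ℝ≥0} (hK : ∀ s ∈ I, |h s| ≤ K) :
    LipschitzWith (2 * K) (greenIntegral h) := by
  refine LipschitzWith.of_dist_le_mul fun t t' => ?_
  have hint : ∀ t, IntervalIntegrable (fun s => Kgreen t s * h s) volume 0 1 := fun t =>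
    ((continuous_Kgreen.comp (by fun_prop : Continuous (t, ·))).mul hh).intervalIntegrable _ _
  have := intervalIntegral.norm_integral_le_of_norm_le_const (a := 0) (b := 1)
    (f := fun s => Kgreen t s * h s - Kgreen t' s * h s) (C := 2 * |t - t'| * K) fun s hs => by
      rw [uIoc_of_le zero_le_one] at hs
      have hs : s ∈ I := Ioc_subset_Icc_self hs
      rw [Real.norm_eq_abs, ← sub_mul, abs_mul]
      exact mul_le_mul (abs_Kgreen_sub_Kgreen_le hs t t') (hK s hs) (abs_nonneg _)
        (by positivity)
  rw [intervalIntegral.integral_sub (hint t) (hint t')] at this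
  simpa [greenIntegral, Real.dist_eq, mul_comm, mul_left_comm, mul_assoc] using this

lemma tendsto_greenIntegral {ι : Type*} {l : Filter ι} [l.IsCountablyGenerated]
    {H : ι → ℝ → ℝ} (hH : ∀ i, Continuous (H i)) (hC : ∀ i, ∀ s ∈ I, |H i s| ≤ C)
    (hlim : ∀ s ∈ I, Tendsto (fun i => H i s) l (𝓝 (h s))) (t : ℝ) :
    Tendsto (fun i => greenIntegral (H i) t) l (𝓝 (greenIntegral h t)) := by
  have hK : Continuous (Kgreen t) := continuous_Kgreen.comp (by fun_prop : Continuous (t, ·))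
  refine intervalIntegral.tendsto_integral_filter_of_dominated_convergence
    (fun s => |Kgreen t s| * C) (Eventually.of_forall fun i => (hK.mul (hH i)).aestronglyMeasurable)
    (Eventually.of_forall fun i => Eventually.of_forall fun s hs => ?_)
    ((hK.abs.mul continuous_const).intervalIntegrable _ _)
    (Eventually.of_forall fun s hs => ?_)
  · rw [uIoc_of_le zero_le_one] at hs
    rw [Real.norm_eq_abs, abs_mul]
    exact mul_le_mul_of_nonneg_left (hC i s (Ioc_subset_Icc_self hs)) (abs_nonneg _)
  · rw [uIoc_of_le zero_le_one] at hs
    exact (hlim s (Ioc_subset_Icc_self hs)).const_mul _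

lemma continuous_volterraIntegral (hh : Continuous h) : Continuous (volterraIntegral h) := by
  unfold volterraIntegral; fun_prop

lemma abs_volterraIntegral_sub_le (hh : Continuous h) (hh' : Continuous h') {t : ℝ} (ht : t ∈ I)
    {c : ℝ} {n : ℕ} (hb : ∀ s ∈ Icc 0 t, |h s - h' s| ≤ c * s ^ n) :
    |volterraIntegral h t - volterraIntegral h' t| ≤ c * t ^ (n + 1) / (n + 1) := by
  have hint : ∀ k : ℝ → ℝ, Continuous k →
      IntervalIntegrable (fun s => (t - s) * k s) volume 0 t :=
    fun k hk => (by fun_prop : Continuous fun s => (t - s) * k s).intervalIntegrable _ _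
  rw [volterraIntegral, volterraIntegral, ← intervalIntegral.integral_sub (hint h hh) (hint h' hh')]
  calc |∫ s in (0 : ℝ)..t, ((t - s) * h s - (t - s) * h' s)|
      ≤ ∫ s in (0 : ℝ)..t, c * s ^ n := by
        rw [← Real.norm_eq_abs]
        refine intervalIntegral.norm_integral_le_of_norm_le ht.1
          (Eventually.of_forall fun s hs => ?_)
          ((by fun_prop : Continuous fun s : ℝ => c * s ^ n).intervalIntegrable (μ := volume) _ _)
        have hs : s ∈ Icc 0 t := Ioc_subset_Icc_self hs
        rw [Real.norm_eq_abs, ← mul_sub, abs_mul]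
        have : |t - s| ≤ 1 := by
          rw [abs_le]; constructor <;> linarith [hs.1, hs.2, ht.2]
        exact (mul_le_of_le_one_left (abs_nonneg _) this).trans (hb s hs)
    _ = c * t ^ (n + 1) / (n + 1) := by
        rw [intervalIntegral.integral_const_mul, integral_pow]
        ring

end GreenIntegral

section Shooting

variable (g : C(ℝ, ℝ))

/-- A fixed point `u` of `volterraMap g φ` satisfies `(u - φ)'' = -g ∘ u` and
`(u - φ) 0 = (u - φ)' 0 = 0`; for `φ t = a t + Z t` this is the initial value problem of the
shooting method with slope `a`. -/
noncomputable def volterraMap (φ x : I →ᵇ ℝ) : I →ᵇ ℝ :=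
  φ - mkOfCompact ⟨fun t : I => volterraIntegral (g ∘ IccExtend zero_le_one x) t,
    (continuous_volterraIntegral (by fun_prop)).comp continuous_subtype_val⟩

lemma volterraMap_apply (φ x : I →ᵇ ℝ) (t : I) :
    volterraMap g φ x t = φ t - volterraIntegral (g ∘ IccExtend zero_le_one x) t :=
  rfl

lemma dist_volterraMap_volterraMap (φ ψ x : I →ᵇ ℝ) :
    dist (volterraMap g φ x) (volterraMap g ψ x) = dist φ ψ :=
  dist_sub_right _ _ _

variable {g} {L : ℝ≥0}

lemma abs_iterate_volterraMap_sub_le (hg : LipschitzWith L g) (φ x y : I →ᵇ ℝ) (n : ℕ)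
    (t : I) :
    |(volterraMap g φ)^[n] x t - (volterraMap g φ)^[n] y t|
      ≤ (L * t) ^ n / n.factorial * dist x y := by
  induction n generalizing t with
  | zero => simpa [Real.dist_eq] using dist_coe_le_dist (f := x) (g := y) t
  | succ n ih =>
    set X := (volterraMap g φ)^[n] x
    set Y := (volterraMap g φ)^[n] y
    rw [Function.iterate_succ_apply', Function.iterate_succ_apply', volterraMap_apply,
      volterraMap_apply, sub_sub_sub_cancel_left, abs_sub_comm]
    have step := abs_volterraIntegral_sub_le (h := g ∘ IccExtend zero_le_one X)
      (h' := g ∘ IccExtend zero_le_one Y) (by fun_prop) (by fun_prop) t.2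
      (c := L ^ (n + 1) / n.factorial * dist x y) (n := n) fun s hs => by
        have hs' : s ∈ I := ⟨hs.1, hs.2.trans t.2.2⟩
        simp only [Function.comp_apply, IccExtend_of_mem _ _ hs']
        calc |g (X ⟨s, hs'⟩) - g (Y ⟨s, hs'⟩)| ≤ L * |X ⟨s, hs'⟩ - Y ⟨s, hs'⟩| := by
              simpa [Real.dist_eq] using hg.dist_le_mul (X ⟨s, hs'⟩) (Y ⟨s, hs'⟩)
          _ ≤ L * ((L * s) ^ n / n.factorial * dist x y) := by gcongr; exact ih ⟨s, hs'⟩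
          _ = L ^ (n + 1) / n.factorial * dist x y * s ^ n := by ring
    refine step.trans_eq ?_
    rw [Nat.factorial_succ]
    push_cast
    field_simp
    ring

lemma dist_iterate_volterraMap_le (hg : LipschitzWith L g) (φ : I →ᵇ ℝ) (n : ℕ)
    (x y : I →ᵇ ℝ) :
    dist ((volterraMap g φ)^[n] x) ((volterraMap g φ)^[n] y) ≤ L ^ n / n.factorial * dist x y := by
  refine (dist_le (by positivity)).2 fun t => ?_
  rw [Real.dist_eq]
  refine (abs_iterate_volterraMap_sub_le hg φ x y n t).trans ?_
  have : (L * t : ℝ) ^ n ≤ L ^ n := by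
    gcongr
    · exact mul_nonneg L.coe_nonneg t.2.1
    · exact mul_le_of_le_one_right L.coe_nonneg t.2.2
  gcongr

lemma lipschitzWith_volterraMap (hg : LipschitzWith L g) (φ : I →ᵇ ℝ) :
    LipschitzWith L (volterraMap g φ) :=
  LipschitzWith.of_dist_le_mul fun x y => by
    simpa using dist_iterate_volterraMap_le hg φ 1 x y

lemma exists_contractingWith_iterate_volterraMap (hg : LipschitzWith L g) :
    ∃ (N : ℕ) (K : ℝ≥0), ∀ φ, ContractingWith K (volterraMap g φ)^[N] := by
  obtain ⟨N, hN⟩ := ((FloorSemiring.tendsto_pow_div_factorial_atTop (L : ℝ)).eventually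
    (gt_mem_nhds one_pos)).exists
  refine ⟨N, L ^ N / N.factorial, fun φ => ⟨?_, ?_⟩⟩
  · rw [← NNReal.coe_lt_one]; push_cast; exact hN
  · refine LipschitzWith.of_dist_le_mul fun x y => ?_
    push_cast
    exact dist_iterate_volterraMap_le hg φ N x y

lemma exists_continuous_isFixedPt_volterraMap (hg : LipschitzWith L g) :
    ∃ X : (I →ᵇ ℝ) → I →ᵇ ℝ, Continuous X ∧ ∀ φ, Function.IsFixedPt (volterraMap g φ) (X φ) := by
  obtain ⟨N, K, hK⟩ := exists_contractingWith_iterate_volterraMap hg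
  refine ⟨fun φ => (hK φ).fixedPoint _, LipschitzWith.continuous (K := Real.toNNReal
    ((∑ k ∈ Finset.range N, (L : ℝ) ^ k) / (1 - K))) ?_,
    fun φ => (hK φ).isFixedPt_fixedPoint_iterate⟩
  refine LipschitzWith.of_dist_le' fun φ ψ => ?_
  refine ((hK φ).fixedPoint_lipschitz_in_map (hK ψ) fun z =>
    (lipschitzWith_volterraMap hg φ).dist_iterate_iterate_le
      (fun z => (dist_volterraMap_volterraMap g φ ψ z).le) N z).trans_eq ?_
  ring

theorem exists_eq_greenIntegral_add_of_lipschitzWith (hg : LipschitzWith L g) {B : ℝ}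
    (hB : ∀ y, |g y| ≤ B) (Z : I →ᵇ ℝ) :
    ∃ x : I →ᵇ ℝ, ∀ t : I, x t = greenIntegral (g ∘ IccExtend zero_le_one x) t + Z t := by
  obtain ⟨X, hXc, hX⟩ := exists_continuous_isFixedPt_volterraMap hg
  let ι : I →ᵇ ℝ := mkOfCompact ⟨Subtype.val, continuous_subtype_val⟩
  let x (a : ℝ) := X (a • ι + Z)
  let c (a : ℝ) := volterraIntegral (g ∘ IccExtend zero_le_one (x a)) 1
  have hx : ∀ a t, x a t = a * t + Z t - volterraIntegral (g ∘ IccExtend zero_le_one (x a)) t :=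
    fun a t => by
      rw [show x a t = volterraMap g (a • ι + Z) (x a) t from congrArg (· t) (hX _).eq.symm,
        volterraMap_apply]
      simp [ι]
  have hc : ∀ a, |c a| ≤ B := fun a => by
    have := abs_volterraIntegral_sub_le (h := g ∘ IccExtend zero_le_one (x a)) (h' := 0)
      (by fun_prop) continuous_const (right_mem_Icc.2 zero_le_one) (c := B) (n := 0)
      fun s _ => by simpa using hB _
    simpa [volterraIntegral, c] using this
  have hcont : Continuous fun a => a - c a := by
    have : (fun a => a - c a) = fun a => x a 1 - Z 1 := funext fun a => by
      rw [hx, Set.Icc.coe_one]; ring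
    rw [this]
    exact ((continuous_eval_const 1).comp (hXc.comp (by fun_prop))).sub continuous_const
  have hB0 : 0 ≤ B := (abs_nonneg _).trans (hB 0)
  obtain ⟨a, -, ha⟩ := intermediate_value_Icc (neg_le_self hB0) hcont.continuousOn
    (show (0 : ℝ) ∈ Icc _ _ from ⟨by linarith [abs_le.1 (hc (-B))], by linarith [abs_le.1 (hc B)]⟩)
  refine ⟨x a, fun t => ?_⟩
  rw [hx, greenIntegral_eq (by fun_prop) t.2]
  linear_combination (t : ℝ) * ha

end Shooting

theorem exists_eq_greenIntegral_add {f : ℝ → ℝ} (hf : Continuous f) {C : ℝ≥0}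
    (hC : ∀ y, |f y| ≤ C) (Z : I →ᵇ ℝ) :
    ∃ x : I →ᵇ ℝ, ∀ t : I, x t = greenIntegral (f ∘ IccExtend zero_le_one x) t + Z t := by
  have hm : ∀ y, -(C : ℝ) ≤ f y := fun y => (abs_le.1 (hC y)).1
  let g (n : ℕ) : C(ℝ, ℝ) :=
    ⟨lipschitzEnvelope f n, (lipschitzWith_lipschitzEnvelope hm n).continuous⟩
  have hgC : ∀ n y, |g n y| ≤ C := fun n y => abs_le.2
    ⟨le_lipschitzEnvelope hm n y, (lipschitzEnvelope_le hm n y).trans (abs_le.1 (hC y)).2⟩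
  choose x hx using fun n : ℕ =>
    exists_eq_greenIntegral_add_of_lipschitzWith (lipschitzWith_lipschitzEnvelope hm n) (hgC n) Z
  let H (n : ℕ) := g n ∘ IccExtend zero_le_one (x n)
  have hH : ∀ n, Continuous (H n) := fun n => by fun_prop
  have hHC : ∀ n, ∀ s ∈ I, |H n s| ≤ C := fun n s _ => hgC n _
  let G (n : ℕ) : I →ᵇ ℝ := x n - Z
  have hG : ∀ n t, G n t = greenIntegral (H n) t := fun n t => by simp [G, hx n t, H]
  have hcompact : IsCompact (closure (range G)) := by
    refine arzela_ascoli (Icc (-(C : ℝ)) C) isCompact_Icc _ ?_ ?_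
    · rintro _ t ⟨n, rfl⟩
      exact abs_le.1 (hG n t ▸ abs_greenIntegral_le (hHC n) t.2)
    · refine (LipschitzWith.uniformEquicontinuous _ (2 * C) ?_).equicontinuous
      rintro ⟨_, n, rfl⟩
      have : (G n : I → ℝ) = greenIntegral (H n) ∘ Subtype.val := funext (hG n)
      rw [this]
      simpa using (lipschitzWith_greenIntegral (hH n) (hHC n)).comp (LipschitzWith.subtype_val I)
  obtain ⟨G₀, -, ψ, hψ, hlim⟩ :=
    hcompact.tendsto_subseq fun n => subset_closure (mem_range_self n)
  refine ⟨G₀ + Z, fun t => ?_⟩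
  have hxlim : Tendsto (fun k => x (ψ k)) atTop (𝓝 (G₀ + Z)) := by
    simpa [G] using hlim.add_const Z
  have hHlim : ∀ s ∈ I, Tendsto (fun k => H (ψ k) s) atTop
      (𝓝 ((f ∘ IccExtend zero_le_one (G₀ + Z)) s)) := fun s _ =>
    tendsto_lipschitzEnvelope hm hf.continuousAt
      (tendsto_natCast_atTop_atTop.comp hψ.tendsto_atTop)
      ((continuous_eval_const _).tendsto _ |>.comp hxlim)
  have h₁ : Tendsto (fun k => G (ψ k) t) atTop (𝓝 (G₀ t)) :=
    (continuous_eval_const t).tendsto _ |>.comp hlim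
  have h₂ : Tendsto (fun k => G (ψ k) t) atTop
      (𝓝 (greenIntegral (f ∘ IccExtend zero_le_one (G₀ + Z)) t)) := by
    exact (tendsto_greenIntegral (fun k => hH (ψ k)) (fun k => hHC (ψ k)) hHlim t).congr
      fun k => (hG _ t).symm
  rw [BoundedContinuousFunction.add_apply, tendsto_nhds_unique h₁ h₂]
  rfl

lemma continuousOn_Yw {ω : ℝ → ℝ} (hω : ContinuousOn ω I) : ContinuousOn (Yw ω) I := by
  have hint : IntegrableOn ω (uIcc 0 1) := by
    rw [uIcc_of_le zero_le_one]
    exact ContinuousOn.integrableOn_Icc (a := 0) (b := 1) hω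
  have hprim := intervalIntegral.continuousOn_primitive_interval hint
  rw [uIcc_of_le zero_le_one] at hprim
  unfold Yw
  exact (continuousOn_id.neg.mul continuousOn_const).add hprim

theorem stmt15_general (f : ℝ → ℝ) (hf : Continuous f) (hb : ∃ C : ℝ, ∀ x : ℝ, |f x| ≤ C)
    (ω : ℝ → ℝ) (hω : ContinuousOn ω (Set.Icc 0 1)) :
    ∃ X : ℝ → ℝ, ContinuousOn X (Set.Icc 0 1) ∧
      (∀ t ∈ Set.Icc (0:ℝ) 1,
        X t = (∫ s in (0:ℝ)..1, Kgreen t s * f (X s)) + Yw ω t) ∧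
      X 0 = 0 ∧ X 1 = 0 := by
  obtain ⟨C, hC⟩ := hb
  obtain ⟨x, hx⟩ := exists_eq_greenIntegral_add hf (C := C.toNNReal)
    (fun y => (hC y).trans (Real.le_coe_toNNReal C))
    (mkOfCompact ⟨_, (continuousOn_Yw hω).domRestrict⟩)
  have hX : ∀ t ∈ I, IccExtend zero_le_one x t =
      greenIntegral (f ∘ IccExtend zero_le_one x) t + Yw ω t := fun t ht => by
    rw [IccExtend_of_mem _ _ ht, hx]
    rfl
  refine ⟨IccExtend zero_le_one x, x.continuous.Icc_extend'.continuousOn, hX, ?_, ?_⟩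
  · rw [hX 0 (left_mem_Icc.2 zero_le_one), greenIntegral_zero_left]
    simp [Yw]
  · rw [hX 1 (right_mem_Icc.2 zero_le_one), greenIntegral_one_left]
    simp [Yw]

/-- existence of a continuous solution of the Green's-function integral
equation when `f` is continuous and bounded. -/
theorem stmt15 (f : ℝ → ℝ) (hf : Continuous f) (hb : ∃ C : ℝ, ∀ x : ℝ, |f x| ≤ C)
    (ω : ℝ → ℝ) (hω : ContinuousOn ω (Set.Icc 0 1)) (hω0 : ω 0 = 0) :
    ∃ X : ℝ → ℝ, ContinuousOn X (Set.Icc 0 1) ∧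
      (∀ t ∈ Set.Icc (0:ℝ) 1,
        X t = (∫ s in (0:ℝ)..1, Kgreen t s * f (X s)) + Yw ω t) ∧
      X 0 = 0 ∧ X 1 = 0 :=
  stmt15_general f hf hb ω hω
end

section
/- Let ρ : [0,1] → ℝ be measurable and suppose there exists h > 0 such that h < ρ(t) < π² for almost every t ∈ [0,1]. If v : [0,1] → ℝ is continuously differentiable with v' absolutely continuous, v(0) = v(1) = 0, and v''(t) + ρ(t)v(t) = 0 for almost every t ∈ [0,1], then v is identically zero. -/
/-!
Multiplying the equation by `v` and integrating by parts (legitimate since `v'` is absolutely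
continuous) gives `∫ ρ v² = -∫ v v'' = ∫ v'²`. Wirtinger's inequality `π² ∫ v² ≤ ∫ v'²` then
yields `∫ (π² - ρ) v² ≤ 0` with a positive weight `π² - ρ`, so `v = 0` a.e., hence everywhere by
continuity. Wirtinger's inequality comes from Picone's identity for `g(t) = m cot (m t + c)`,
a solution of the Riccati equation `g' = -m² - g²` which is finite on `[0, 1]` when `|m| < π`,
followed by the limit `m → π`.
-/

open MeasureTheory Set Filter Real Topology

theorem AbsolutelyContinuousOnInterval.congr {X : Type*} [PseudoMetricSpace X] {f g : ℝ → X}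
    {a b : ℝ} (hf : AbsolutelyContinuousOnInterval f a b) (hfg : EqOn f g (uIcc a b)) :
    AbsolutelyContinuousOnInterval g a b := by
  refine Tendsto.congr' ?_ hf
  filter_upwards [mem_inf_of_right (mem_principal_self _)] with E hE
  exact Finset.sum_congr rfl fun i hi => by rw [hfg (hE.1 i hi).1, hfg (hE.1 i hi).2]

theorem absolutelyContinuousOnInterval_of_hasDerivWithinAt {f f' : ℝ → ℝ} {a b : ℝ}
    (hf : ∀ t ∈ uIcc a b, HasDerivWithinAt f (f' t) (uIcc a b) t)
    (hf' : ContinuousOn f' (uIcc a b)) :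
    AbsolutelyContinuousOnInterval f a b := by
  obtain ⟨C, hC⟩ := isCompact_uIcc.exists_bound_of_continuousOn hf'
  refine (Convex.lipschitzOnWith_of_nnnorm_hasDerivWithin_le (C := C.toNNReal)
    (convex_uIcc a b) hf fun t ht => ?_).absolutelyContinuousOnInterval
  rw [← NNReal.coe_le_coe, coe_nnnorm]
  exact (hC t ht).trans (Real.le_coe_toNNReal C)

theorem absolutelyContinuousOnInterval_of_eq_add_integral {g g' : ℝ → ℝ} {a b : ℝ}
    (hg' : IntervalIntegrable g' volume a b)
    (hg : ∀ t ∈ uIcc a b, g t = g a + ∫ s in a..t, g' s) :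
    AbsolutelyContinuousOnInterval g a b :=
  ((LipschitzWith.const (g a)).lipschitzOnWith.absolutelyContinuousOnInterval.fun_add
    (hg'.absolutelyContinuousOnInterval_intervalIntegral left_mem_uIcc)).congr
    fun t ht => (hg t ht).symm

theorem integral_mul_deriv_eq_deriv_mul_of_eq_add_integral {f f' g g' : ℝ → ℝ} {a b : ℝ}
    (hab : a ≤ b)
    (hf : ∀ t ∈ Icc a b, HasDerivWithinAt f (f' t) (Icc a b) t)
    (hf' : ContinuousOn f' (Icc a b)) (hg' : IntervalIntegrable g' volume a b)
    (hg : ∀ t ∈ Icc a b, g t = g a + ∫ s in a..t, g' s) :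
    ∫ x in a..b, f x * g' x = f b * g b - f a * g a - ∫ x in a..b, f' x * g x := by
  have mem_Ioo {x} (hx : x ∈ uIoc a b) (hxb : x ≠ b) : x ∈ Ioo a b := by
    rw [uIoc_of_le hab] at hx
    exact ⟨hx.1, hx.2.lt_of_ne hxb⟩
  have hf_deriv : ∀ᵐ x, x ∈ uIoc a b → deriv f x = f' x := by
    filter_upwards [Measure.ae_ne volume b] with x hxb hx
    have hx := mem_Ioo hx hxb
    exact ((hf x (Ioo_subset_Icc_self hx)).hasDerivAt (Icc_mem_nhds hx.1 hx.2)).deriv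
  have hg_deriv : ∀ᵐ x, x ∈ uIoc a b → deriv g x = g' x := by
    filter_upwards [hg'.ae_hasDerivAt_integral, Measure.ae_ne volume b] with x hint hxb hx
    have hxo := mem_Ioo hx hxb
    refine (((hint (uIoc_subset_uIcc hx) a left_mem_uIcc).const_add (g a)).congr_of_eventuallyEq
      ?_).deriv
    filter_upwards [Icc_mem_nhds hxo.1 hxo.2] with y hy using hg y hy
  rw [← uIcc_of_le hab] at hf hf' hg
  have hfAC := absolutelyContinuousOnInterval_of_hasDerivWithinAt hf hf'
  have hgAC := absolutelyContinuousOnInterval_of_eq_add_integral hg' hg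
  calc ∫ x in a..b, f x * g' x = ∫ x in a..b, f x * deriv g x :=
        intervalIntegral.integral_congr_ae (hg_deriv.mono fun x hx hxI => by rw [hx hxI])
    _ = f b * g b - f a * g a - ∫ x in a..b, deriv f x * g x :=
        hfAC.integral_mul_deriv_eq_deriv_mul hgAC
    _ = f b * g b - f a * g a - ∫ x in a..b, f' x * g x := by
        rw [intervalIntegral.integral_congr_ae (hf_deriv.mono fun x hx hxI => by rw [hx hxI])]

theorem hasDerivAt_mul_cos_div_sin {m c t : ℝ} (ht : sin (m * t + c) ≠ 0) :
    HasDerivAt (fun t => m * cos (m * t + c) / sin (m * t + c))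
      (-m ^ 2 - (m * cos (m * t + c) / sin (m * t + c)) ^ 2) t := by
  have hθ : HasDerivAt (fun t => m * t + c) m t :=
    (((hasDerivAt_id t).const_mul m).add_const c).congr_deriv (mul_one m)
  refine (((hθ.cos).const_mul m).div hθ.sin ht).congr_deriv ?_
  field_simp

theorem sq_mul_integral_sq_le_integral_sq_deriv {v v' : ℝ → ℝ}
    (hv : ∀ t ∈ Icc (0:ℝ) 1, HasDerivWithinAt v (v' t) (Icc 0 1) t)
    (hv' : ContinuousOn v' (Icc 0 1)) (hv0 : v 0 = 0) (hv1 : v 1 = 0) {m : ℝ} (hm : |m| < π) :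
    m ^ 2 * ∫ t in (0:ℝ)..1, v t ^ 2 ≤ ∫ t in (0:ℝ)..1, v' t ^ 2 := by
  have hsin : ∀ t ∈ Icc (0:ℝ) 1, 0 < sin (m * t + (π / 2 - m / 2)) := by
    intro t ht
    have : |m * (t - 1 / 2)| < π / 2 := by
      rw [abs_mul]
      have : |t - 1 / 2| ≤ 1 / 2 := abs_le.2 ⟨by linarith [ht.1], by linarith [ht.2]⟩
      nlinarith [abs_nonneg m, abs_nonneg (t - 1 / 2)]
    obtain ⟨h1, h2⟩ := abs_lt.1 this
    exact sin_pos_of_pos_of_lt_pi (by linarith) (by linarith)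
  set g := fun t => m * cos (m * t + (π / 2 - m / 2)) / sin (m * t + (π / 2 - m / 2))
  have hg : ∀ t ∈ Icc (0:ℝ) 1, HasDerivAt g (-m ^ 2 - g t ^ 2) t := fun t ht =>
    hasDerivAt_mul_cos_div_sin (hsin t ht).ne'
  have hvc : ContinuousOn v (Icc 0 1) := fun t ht => (hv t ht).continuousWithinAt
  have hgc : ContinuousOn g (Icc 0 1) := fun t ht => (hg t ht).continuousAt.continuousWithinAt
  -- Picone's identity, from `g' = -m² - g²`.
  have hderiv : ∀ t ∈ Ioo (0:ℝ) 1, HasDerivAt (fun t => g t * v t ^ 2)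
      (v' t ^ 2 - m ^ 2 * v t ^ 2 - (v' t - g t * v t) ^ 2) t := by
    intro t ht
    have hvt := (hv t (Ioo_subset_Icc_self ht)).hasDerivAt (Icc_mem_nhds ht.1 ht.2)
    refine ((hg t (Ioo_subset_Icc_self ht)).mul (hvt.pow 2)).congr_deriv ?_
    simp only [Pi.pow_apply]
    ring
  have hF_int {F : ℝ → ℝ} (hF : ContinuousOn F (Icc 0 1)) : IntervalIntegrable F volume 0 1 :=
    hF.intervalIntegrable_of_Icc zero_le_one
  have hFTC := intervalIntegral.integral_eq_sub_of_hasDerivAt_of_le zero_le_one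
    (hgc.mul (hvc.pow 2)) hderiv (hF_int (by fun_prop))
  simp only [Pi.mul_apply, Pi.pow_apply, hv0, hv1] at hFTC
  rw [intervalIntegral.integral_sub, intervalIntegral.integral_sub,
    intervalIntegral.integral_const_mul] at hFTC
  · have := intervalIntegral.integral_nonneg (μ := volume) zero_le_one
      fun t _ => sq_nonneg (v' t - g t * v t)
    linarith
  all_goals exact hF_int (by fun_prop)

theorem pi_sq_mul_integral_sq_le_integral_sq_deriv {v v' : ℝ → ℝ}
    (hv : ∀ t ∈ Icc (0:ℝ) 1, HasDerivWithinAt v (v' t) (Icc 0 1) t)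
    (hv' : ContinuousOn v' (Icc 0 1)) (hv0 : v 0 = 0) (hv1 : v 1 = 0) :
    π ^ 2 * ∫ t in (0:ℝ)..1, v t ^ 2 ≤ ∫ t in (0:ℝ)..1, v' t ^ 2 := by
  have hlim : Tendsto (fun m => m ^ 2 * ∫ t in (0:ℝ)..1, v t ^ 2) (𝓝[<] π)
      (𝓝 (π ^ 2 * ∫ t in (0:ℝ)..1, v t ^ 2)) :=
    ((continuous_pow 2).mul continuous_const).tendsto π |>.mono_left nhdsWithin_le_nhds
  refine le_of_tendsto hlim ?_
  filter_upwards [Ioo_mem_nhdsLT pi_pos] with m hm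
  exact sq_mul_integral_sq_le_integral_sq_deriv hv hv' hv0 hv1
    (abs_lt.2 ⟨by linarith [hm.1, pi_pos], hm.2⟩)

theorem stmt16_general (ρ : ℝ → ℝ)
    (h : ℝ)
    (hρ : ∀ᵐ t ∂(volume.restrict (Set.Icc (0:ℝ) 1)), h < ρ t ∧ ρ t < Real.pi ^ 2)
    (v v' v'' : ℝ → ℝ)
    (hv : ∀ t ∈ Set.Icc (0:ℝ) 1, HasDerivWithinAt v (v' t) (Set.Icc 0 1) t)
    (hv'c : ContinuousOn v' (Set.Icc 0 1))
    (hint : IntervalIntegrable v'' volume 0 1)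
    (hAC : ∀ t ∈ Set.Icc (0:ℝ) 1, v' t = v' 0 + ∫ s in (0:ℝ)..t, v'' s)
    (hode : ∀ᵐ t ∂(volume.restrict (Set.Icc (0:ℝ) 1)), v'' t + ρ t * v t = 0)
    (hv0 : v 0 = 0) (hv1 : v 1 = 0) :
    ∀ t ∈ Set.Icc (0:ℝ) 1, v t = 0 := by
  have hvc : ContinuousOn v (Icc 0 1) := fun t ht => (hv t ht).continuousWithinAt
  have hparts : ∫ t in (0:ℝ)..1, v t * v'' t = -∫ t in (0:ℝ)..1, v' t ^ 2 := by
    have := integral_mul_deriv_eq_deriv_mul_of_eq_add_integral zero_le_one hv hv'c hint hAC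
    simpa [hv0, hv1, sq] using this
  have hv2_int : IntervalIntegrable (fun t => π ^ 2 * v t ^ 2) volume 0 1 :=
    ((hvc.pow 2).intervalIntegrable_of_Icc zero_le_one).const_mul _
  have hvv''_int : IntervalIntegrable (fun t => v t * v'' t) volume 0 1 :=
    hint.continuousOn_mul (by rwa [uIcc_of_le zero_le_one])
  set w := fun t => π ^ 2 * v t ^ 2 + v t * v'' t
  have hw_le : ∫ t in (0:ℝ)..1, w t ≤ 0 := by
    rw [intervalIntegral.integral_add hv2_int hvv''_int, intervalIntegral.integral_const_mul,
      hparts]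
    linarith [pi_sq_mul_integral_sq_le_integral_sq_deriv hv hv'c hv0 hv1]
  have hw : ∀ᵐ t ∂(volume.restrict (Icc 0 1)),
      w t = (π ^ 2 - ρ t) * v t ^ 2 ∧ 0 < π ^ 2 - ρ t := by
    filter_upwards [hρ, hode] with t hρt hodet
    exact ⟨by linear_combination v t * hodet, by linarith [hρt.2]⟩
  have hw_nonneg : 0 ≤ᵐ[volume.restrict (Icc 0 1)] w :=
    hw.mono fun t ht => ht.1 ▸ mul_nonneg ht.2.le (sq_nonneg _)
  have hw_zero : w =ᵐ[volume.restrict (Icc 0 1)] 0 := by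
    refine (integral_eq_zero_iff_of_nonneg_ae hw_nonneg
      ((hv2_int.add hvv''_int).1.congr_set_ae Ioc_ae_eq_Icc.symm)).1
      (le_antisymm ?_ (integral_nonneg_of_ae hw_nonneg))
    rwa [integral_Icc_eq_integral_Ioc, ← intervalIntegral.integral_of_le zero_le_one]
  have hv_zero : v =ᵐ[volume.restrict (Icc 0 1)] 0 := by
    filter_upwards [hw_zero, hw] with t hw0 ⟨hwt, hpos⟩
    simpa [hpos.ne'] using hwt.symm.trans hw0
  exact fun t ht => Measure.eqOn_Icc_of_ae_eq _ zero_ne_one hv_zero hvc continuousOn_const ht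

/-- if `h < ρ(t) < π²` a.e. on `[0,1]` and `v` is a `C¹` function with
absolutely continuous derivative satisfying `v'' + ρ v = 0` a.e. and
`v(0) = v(1) = 0`, then `v ≡ 0` on `[0,1]`. -/
theorem stmt16 (ρ : ℝ → ℝ) (hρmeas : Measurable ρ)
    (h : ℝ) (hh : 0 < h)
    (hρ : ∀ᵐ t ∂(volume.restrict (Set.Icc (0:ℝ) 1)), h < ρ t ∧ ρ t < Real.pi ^ 2)
    (v v' v'' : ℝ → ℝ)
    (hv : ∀ t ∈ Set.Icc (0:ℝ) 1, HasDerivWithinAt v (v' t) (Set.Icc 0 1) t)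
    (hv'c : ContinuousOn v' (Set.Icc 0 1))
    (hint : IntervalIntegrable v'' volume 0 1)
    (hAC : ∀ t ∈ Set.Icc (0:ℝ) 1, v' t = v' 0 + ∫ s in (0:ℝ)..t, v'' s)
    (hode : ∀ᵐ t ∂(volume.restrict (Set.Icc (0:ℝ) 1)), v'' t + ρ t * v t = 0)
    (hv0 : v 0 = 0) (hv1 : v 1 = 0) :
    ∀ t ∈ Set.Icc (0:ℝ) 1, v t = 0 :=
  stmt16_general ρ h hρ v v' v'' hv hv'c hint hAC hode hv0 hv1
end
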